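/- Let h(X) have finite exponential moment near 0 and be non-degenerate under P₀. For sufficiently small η > 0, the optimal value of the problem: maximize E_f[h(X)] over probability measures P_f ≪ P₀ with D(P_f‖P₀) ≤ η, equals ψ'(β*), where β* is the unique positive solution of β ψ'(β) − ψ(β) = η and ψ(β) = log E₀[e^{β h(X)}]. -/

import Mathlib

/-!
Let `ψ` be the cumulant generating function of `h` and `P_β ∝ e^{βh} P` the tilted measure. For `β`
in the interior of the domain of `ψ`, `P_β` has mean `ψ'(β)` and divergence
`D(P_β‖P) = βψ'(β) - ψ(β)`, whose derivative `βψ''(β) = β Var_{P_β}(h)` is positive for `β > 0`;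
so every small `η > 0` is attained at exactly one `β > 0`. Gibbs' inequality `D(Q‖P_β) ≥ 0`
reads `β E_Q[h] ≤ ψ(β) + D(Q‖P)`, so no `Q` with `D(Q‖P) ≤ η` beats `P_β`.
-/

open MeasureTheory Filter Set

open Real in
lemma Real.mul_le_mul_log_sub_add_exp {a : ℝ} (ha : 0 ≤ a) (b : ℝ) :
    a * b ≤ a * log a - a + exp b := by
  rcases ha.eq_or_lt with rfl | ha
  · simpa using (exp_pos b).le
  have : a * (b - log a + 1) ≤ exp b := by
    calc a * (b - log a + 1) ≤ a * exp (b - log a) :=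
          mul_le_mul_of_nonneg_left (add_one_le_exp _) ha.le
      _ = exp b := by rw [exp_sub, exp_log ha]; field_simp
  linarith

namespace ProbabilityTheory

open Real

variable {Ω : Type*} [MeasurableSpace Ω] {μ : Measure Ω} {X : Ω → ℝ} {t s : ℝ}

noncomputable def tiltedDivergence (X : Ω → ℝ) (μ : Measure Ω) (t : ℝ) : ℝ :=
  t * deriv (cgf X μ) t - cgf X μ t

lemma zero_mem_integrableExpSet [IsFiniteMeasure μ] : 0 ∈ integrableExpSet X μ := by
  simp [integrableExpSet]

lemma mem_interior_integrableExpSet_of_lt [IsFiniteMeasure μ] (ht : 0 < t)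
    (hs : s ∈ integrableExpSet X μ) (hts : t < s) : t ∈ interior (integrableExpSet X μ) := by
  have : Icc 0 s ⊆ integrableExpSet X μ :=
    convex_integrableExpSet.ordConnected.out zero_mem_integrableExpSet hs
  exact interior_mono this (by rw [interior_Icc]; exact ⟨ht, hts⟩)

lemma tiltedDivergence_eq_zero_of_sSup_lt (hS : BddAbove (integrableExpSet X μ))
    (ht : sSup (integrableExpSet X μ) < t) : tiltedDivergence X μ t = 0 := by
  have hzero : cgf X μ =ᶠ[nhds t] 0 := by
    filter_upwards [Ioi_mem_nhds ht] with u hu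
    exact cgf_undef fun hu' => (le_csSup hS hu').not_gt hu
  simp [tiltedDivergence, hzero.deriv_eq, hzero.eq_of_nhds]

lemma tiltedDivergence_eq_zero_of_notMem_interior [IsFiniteMeasure μ] (ht : 0 < t)
    (hti : t ∉ interior (integrableExpSet X μ)) (hne : t ≠ sSup (integrableExpSet X μ)) :
    tiltedDivergence X μ t = 0 := by
  by_cases hS : BddAbove (integrableExpSet X μ)
  · rcases hne.lt_or_gt with hlt | hgt
    · obtain ⟨s, hs, hts⟩ := exists_lt_of_lt_csSup ⟨0, zero_mem_integrableExpSet⟩ hlt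
      exact absurd (mem_interior_integrableExpSet_of_lt ht hs hts) hti
    · exact tiltedDivergence_eq_zero_of_sSup_lt hS hgt
  · obtain ⟨s, hs, hts⟩ := not_bddAbove_iff.1 hS t
    exact absurd (mem_interior_integrableExpSet_of_lt ht hs hts) hti

lemma iteratedDeriv_two_cgf_pos [IsProbabilityMeasure μ] (hX : ¬ ∃ c : ℝ, X =ᵐ[μ] fun _ => c)
    (ht : t ∈ interior (integrableExpSet X μ)) : 0 < iteratedDeriv 2 (cgf X μ) t := by
  have ht' : Integrable (fun ω ↦ exp (t * X ω)) μ :=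
    interior_subset (s := integrableExpSet X μ) ht
  have := isProbabilityMeasure_tilted ht'
  rw [← variance_tilted_mul ht]
  refine (variance_nonneg _ _).lt_of_ne fun h0 => hX ⟨(μ.tilted (t * X ·))[X], ?_⟩
  exact (absolutelyContinuous_tilted ht').ae_le
    (ae_eq_integral_of_variance_eq_zero (memLp_tilted_mul ht 2) h0.symm)

lemma hasDerivAt_tiltedDivergence (ht : t ∈ interior (integrableExpSet X μ)) :
    HasDerivAt (tiltedDivergence X μ) (t * iteratedDeriv 2 (cgf X μ) t) t := by
  have hψ : HasDerivAt (cgf X μ) (deriv (cgf X μ) t) t :=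
    (analyticAt_cgf ht).differentiableAt.hasDerivAt
  have hψ' : HasDerivAt (deriv (cgf X μ)) (iteratedDeriv 2 (cgf X μ) t) t := by
    rw [iteratedDeriv_succ, iteratedDeriv_one]
    exact (analyticAt_cgf ht).deriv.differentiableAt.hasDerivAt
  refine (((hasDerivAt_id t).mul hψ').sub hψ).congr_deriv ?_
  simp

lemma strictMonoOn_tiltedDivergence [IsProbabilityMeasure μ]
    (hX : ¬ ∃ c : ℝ, X =ᵐ[μ] fun _ => c) :
    StrictMonoOn (tiltedDivergence X μ) (Ici 0 ∩ interior (integrableExpSet X μ)) := by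
  refine strictMonoOn_of_deriv_pos ((convex_Ici 0).inter convex_integrableExpSet.interior)
    (fun t ht => (hasDerivAt_tiltedDivergence ht.2).continuousAt.continuousWithinAt) ?_
  rw [interior_inter, interior_Ici, interior_interior]
  exact fun t ht => (hasDerivAt_tiltedDivergence ht.2).deriv ▸
    mul_pos ht.1 (iteratedDeriv_two_cgf_pos hX ht.2)

lemma llr_tilted_ae_eq [IsProbabilityMeasure μ] (ht : t ∈ interior (integrableExpSet X μ)) :
    llr (μ.tilted (t * X ·)) μ =ᵐ[μ.tilted (t * X ·)] fun ω ↦ t * X ω - cgf X μ t := by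
  have hXm : AEMeasurable X μ := aemeasurable_of_mem_interior_integrableExpSet ht
  refine (tilted_absolutelyContinuous μ _).ae_le ?_
  filter_upwards [llr_tilted_left Measure.AbsolutelyContinuous.rfl
    (interior_subset (s := integrableExpSet X μ) ht) (hXm.const_mul t), llr_self μ] with ω h1 h2
  rw [h1, h2, Pi.zero_apply, add_zero]
  rfl

lemma integrable_rnDeriv_tilted_mul_log [IsProbabilityMeasure μ]
    (ht : t ∈ interior (integrableExpSet X μ)) :
    Integrable (fun ω ↦ ((μ.tilted (t * X ·)).rnDeriv μ ω).toReal *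
      log ((μ.tilted (t * X ·)).rnDeriv μ ω).toReal) μ := by
  have := isProbabilityMeasure_tilted (interior_subset (s := integrableExpSet X μ) ht)
  rw [integrable_rnDeriv_mul_log_iff (tilted_absolutelyContinuous μ _),
    integrable_congr (llr_tilted_ae_eq ht)]
  exact ((memLp_one_iff_integrable.1 (memLp_tilted_mul ht 1)).const_mul t).sub
    (integrable_const _)

lemma integral_rnDeriv_tilted_mul_log [IsProbabilityMeasure μ]
    (ht : t ∈ interior (integrableExpSet X μ)) :
    ∫ ω, ((μ.tilted (t * X ·)).rnDeriv μ ω).toReal *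
      log ((μ.tilted (t * X ·)).rnDeriv μ ω).toReal ∂μ = tiltedDivergence X μ t := by
  have := isProbabilityMeasure_tilted (interior_subset (s := integrableExpSet X μ) ht)
  rw [integral_rnDeriv_mul_log (tilted_absolutelyContinuous μ _),
    integral_congr_ae (llr_tilted_ae_eq ht),
    integral_sub ((memLp_one_iff_integrable.1 (memLp_tilted_mul ht 1)).const_mul t)
      (integrable_const _), integral_const_mul, integral_tilted_mul_self ht]
  simp [tiltedDivergence]

lemma integrable_of_integrable_rnDeriv_mul_log [IsFiniteMeasure μ] {Q : Measure Ω}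
    [IsFiniteMeasure Q] (hQ : Q ≪ μ)
    (hL : Integrable (fun ω ↦ (Q.rnDeriv μ ω).toReal * log (Q.rnDeriv μ ω).toReal) μ)
    {ε : ℝ} (hε : 0 < ε) (hpos : Integrable (fun ω ↦ exp (ε * X ω)) μ)
    (hneg : Integrable (fun ω ↦ exp (-ε * X ω)) μ) : Integrable X Q := by
  have hXm : AEMeasurable X μ := aemeasurable_of_integrable_exp_mul (by linarith) hpos hneg
  rw [← integrable_toReal_rnDeriv_mul_iff hQ]
  have hbound := (hL.sub (Measure.integrable_toReal_rnDeriv (μ := Q) (ν := μ))).add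
    (integrable_exp_mul_abs hpos hneg)
  refine (hbound.div_const ε).mono'
    ((Measure.measurable_rnDeriv Q μ).ennreal_toReal.aemeasurable.mul hXm).aestronglyMeasurable
    (Eventually.of_forall fun ω ↦ ?_)
  have hL0 : 0 ≤ (Q.rnDeriv μ ω).toReal := ENNReal.toReal_nonneg
  rw [norm_mul, Real.norm_of_nonneg hL0, Real.norm_eq_abs, le_div_iff₀ hε, Pi.add_apply,
    Pi.sub_apply]
  linarith [mul_le_mul_log_sub_add_exp hL0 (ε * |X ω|)]

lemma mul_integral_le_cgf_add_integral_rnDeriv_mul_log [IsProbabilityMeasure μ] {Q : Measure Ω}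
    [IsProbabilityMeasure Q] (hQ : Q ≪ μ)
    (hL : Integrable (fun ω ↦ (Q.rnDeriv μ ω).toReal * log (Q.rnDeriv μ ω).toReal) μ)
    (hXQ : Integrable X Q) (ht : Integrable (fun ω ↦ exp (t * X ω)) μ) :
    t * ∫ ω, X ω ∂Q ≤
      cgf X μ t + ∫ ω, (Q.rnDeriv μ ω).toReal * log (Q.rnDeriv μ ω).toReal ∂μ := by
  have := isProbabilityMeasure_tilted ht
  have hllr : Integrable (llr Q μ) Q := (integrable_rnDeriv_mul_log_iff hQ).1 hL
  have hgibbs := InformationTheory.integral_llr_add_sub_measure_univ_nonneg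
    (hQ.trans (absolutelyContinuous_tilted ht))
    (integrable_llr_tilted_right hQ (hXQ.const_mul t) hllr ht)
  rw [integral_llr_tilted_right hQ (hXQ.const_mul t) ht hllr, integral_const_mul,
    probReal_univ, probReal_univ] at hgibbs
  rw [integral_rnDeriv_mul_log hQ, cgf, mgf]
  linarith

lemma exists_pos_forall_tiltedDivergence_eq [IsProbabilityMeasure μ]
    (hX : ¬ ∃ c : ℝ, X =ᵐ[μ] fun _ => c) (h0 : 0 ∈ interior (integrableExpSet X μ)) :
    ∃ η₀ > 0, ∀ η ∈ Ioo 0 η₀, (∃ β > 0, tiltedDivergence X μ β = η) ∧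
      ∀ β > 0, tiltedDivergence X μ β = η → β ∈ interior (integrableExpSet X μ) := by
  set D := tiltedDivergence X μ
  set c := sSup (integrableExpSet X μ)
  obtain ⟨u, hu, huI⟩ := exists_Ico_subset_of_mem_nhds (isOpen_interior.mem_nhds h0) ⟨1, one_pos⟩
  set a := u / 2
  have ha : 0 < a := half_pos hu
  have haI : Icc 0 a ⊆ interior (integrableExpSet X μ) :=
    (Icc_subset_Ico_right (half_lt_self hu)).trans huI
  have hD0 : D 0 = 0 := by simp [D, tiltedDivergence]
  have hDa : 0 < D a := hD0 ▸ strictMonoOn_tiltedDivergence hX ⟨mem_Ici.2 le_rfl, h0⟩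
    ⟨ha.le, haI ⟨ha.le, le_rfl⟩⟩ ha
  -- `D c` is a junk value (`deriv` at the boundary of the domain of `cgf`) that `η` must avoid.
  obtain ⟨η₀, hη₀, hη₀a, hc⟩ : ∃ η₀ > 0, η₀ ≤ D a ∧ D c ∉ Ioo 0 η₀ := by
    by_cases hDc : 0 < D c
    · exact ⟨min (D a) (D c), lt_min hDa hDc, min_le_left _ _,
        fun h => h.2.not_ge (min_le_right _ _)⟩
    · exact ⟨D a, hDa, le_rfl, fun h => hDc h.1⟩
  refine ⟨η₀, hη₀, fun η hη => ⟨?_, fun β hβ hβη => ?_⟩⟩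
  · have hcont : ContinuousOn D (Icc 0 a) := fun t ht =>
      (hasDerivAt_tiltedDivergence (haI ht)).continuousAt.continuousWithinAt
    obtain ⟨β, hβ, hβη⟩ := intermediate_value_Icc ha.le hcont
      ⟨hD0.trans_le hη.1.le, (hη.2.trans_le hη₀a).le⟩
    refine ⟨β, hβ.1.lt_of_ne ?_, hβη⟩
    rintro rfl
    exact hη.1.ne (hD0.symm.trans hβη)
  · by_contra hβI
    rcases eq_or_ne β c with rfl | hne
    · exact hc (hβη ▸ hη)
    · exact hη.1.ne' (hβη.symm.trans (tiltedDivergence_eq_zero_of_notMem_interior hβ hβI hne))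

lemma isGreatest_integral_of_integral_rnDeriv_mul_log_le [IsProbabilityMeasure μ]
    (h0 : 0 ∈ interior (integrableExpSet X μ)) {β : ℝ} (hβ : 0 < β)
    (hβI : β ∈ interior (integrableExpSet X μ)) :
    IsGreatest {v : ℝ | ∃ Q : Measure Ω, IsProbabilityMeasure Q ∧ Q ≪ μ ∧
        Integrable (fun ω ↦ (Q.rnDeriv μ ω).toReal * log (Q.rnDeriv μ ω).toReal) μ ∧
        (∫ ω, (Q.rnDeriv μ ω).toReal * log (Q.rnDeriv μ ω).toReal ∂μ) ≤ tiltedDivergence X μ β ∧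
        v = ∫ ω, X ω ∂Q} (deriv (cgf X μ) β) := by
  have hβint : Integrable (fun ω ↦ exp (β * X ω)) μ :=
    interior_subset (s := integrableExpSet X μ) hβI
  refine ⟨⟨μ.tilted (β * X ·), isProbabilityMeasure_tilted hβint, tilted_absolutelyContinuous μ _,
    integrable_rnDeriv_tilted_mul_log hβI, (integral_rnDeriv_tilted_mul_log hβI).le,
    (integral_tilted_mul_self hβI).symm⟩, ?_⟩
  rintro _ ⟨Q, hQ, hQμ, hL, hKL, rfl⟩
  obtain ⟨ε, hε, hball⟩ := Metric.mem_nhds_iff.1 (mem_interior_iff_mem_nhds.1 h0)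
  have hmom : ∀ θ, |θ| < ε → Integrable (fun ω ↦ exp (θ * X ω)) μ := fun θ hθ =>
    hball (by simpa using hθ)
  have hXQ : Integrable X Q := integrable_of_integrable_rnDeriv_mul_log hQμ hL (half_pos hε)
    (hmom _ (by rw [abs_of_pos (half_pos hε)]; linarith))
    (hmom _ (by rw [abs_neg, abs_of_pos (half_pos hε)]; linarith))
  have := mul_integral_le_cgf_add_integral_rnDeriv_mul_log hQμ hL hXQ hβint
  refine le_of_mul_le_mul_left ?_ hβ
  linarith [show tiltedDivergence X μ β = β * deriv (cgf X μ) β - cgf X μ β from rfl]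

end ProbabilityTheory

theorem stmt6_general {Ω : Type*} [MeasurableSpace Ω] (P : Measure Ω) [IsProbabilityMeasure P]
    (h : Ω → ℝ) (r : ℝ) (hr : 0 < r)
    (hint : ∀ θ ∈ Set.Ioo (-r) r, Integrable (fun x => Real.exp (θ * h x)) P)
    (hnd : ¬ ∃ c : ℝ, h =ᵐ[P] fun _ => c)
    (ψ : ℝ → ℝ) (hψ : ψ = fun b => Real.log (∫ x, Real.exp (b * h x) ∂P)) :
    ∃ η₀ > 0, ∀ η ∈ Set.Ioo (0 : ℝ) η₀,
      (∃! β : ℝ, 0 < β ∧ β * deriv ψ β - ψ β = η) ∧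
      ∀ β : ℝ, 0 < β → β * deriv ψ β - ψ β = η →
        IsGreatest {v : ℝ | ∃ Q : Measure Ω, IsProbabilityMeasure Q ∧ Q ≪ P ∧
            Integrable (fun x =>
              (Q.rnDeriv P x).toReal * Real.log (Q.rnDeriv P x).toReal) P ∧
            (∫ x, (Q.rnDeriv P x).toReal * Real.log (Q.rnDeriv P x).toReal ∂P) ≤ η ∧
            v = ∫ x, h x ∂Q} (deriv ψ β) := by
  obtain rfl : ψ = ProbabilityTheory.cgf h P := hψ
  have h0 : (0 : ℝ) ∈ interior (ProbabilityTheory.integrableExpSet h P) :=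
    interior_maximal hint isOpen_Ioo ⟨neg_neg_of_pos hr, hr⟩
  obtain ⟨η₀, hη₀, hη⟩ := ProbabilityTheory.exists_pos_forall_tiltedDivergence_eq hnd h0
  refine ⟨η₀, hη₀, fun η hηI => ?_⟩
  obtain ⟨⟨β, hβ, hβη⟩, hsolI⟩ := hη η hηI
  refine ⟨⟨β, ⟨hβ, hβη⟩, fun β' ⟨hβ', hβ'η⟩ => ?_⟩, fun β' hβ' hβ'η => ?_⟩
  · exact (ProbabilityTheory.strictMonoOn_tiltedDivergence hnd).injOn
      ⟨hβ'.le, hsolI β' hβ' hβ'η⟩ ⟨hβ.le, hsolI β hβ hβη⟩ (hβ'η.trans hβη.symm)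
  · subst hβ'η
    exact ProbabilityTheory.isGreatest_integral_of_integral_rnDeriv_mul_log_le h0 hβ'
      (hsolI β' hβ' rfl)

/-- For sufficiently small `η > 0`, the maximum of `E_f[h(X)]` over probability measures
`P_f ≪ P₀` with `D(P_f‖P₀) ≤ η` equals `ψ'(β*)`, where `β*` is the unique positive
solution of `β ψ'(β) − ψ(β) = η`. -/
theorem stmt6 {Ω : Type*} [MeasurableSpace Ω] (P : Measure Ω) [IsProbabilityMeasure P]
    (h : Ω → ℝ) (hmeas : Measurable h) (r : ℝ) (hr : 0 < r)
    (hint : ∀ θ ∈ Set.Ioo (-r) r, Integrable (fun x => Real.exp (θ * h x)) P)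
    (hnd : ¬ ∃ c : ℝ, h =ᵐ[P] fun _ => c)
    (ψ : ℝ → ℝ) (hψ : ψ = fun b => Real.log (∫ x, Real.exp (b * h x) ∂P)) :
    ∃ η₀ > 0, ∀ η ∈ Set.Ioo (0 : ℝ) η₀,
      (∃! β : ℝ, 0 < β ∧ β * deriv ψ β - ψ β = η) ∧
      ∀ β : ℝ, 0 < β → β * deriv ψ β - ψ β = η →
        IsGreatest {v : ℝ | ∃ Q : Measure Ω, IsProbabilityMeasure Q ∧ Q ≪ P ∧
            Integrable (fun x =>
              (Q.rnDeriv P x).toReal * Real.log (Q.rnDeriv P x).toReal) P ∧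
            (∫ x, (Q.rnDeriv P x).toReal * Real.log (Q.rnDeriv P x).toReal ∂P) ≤ η ∧
            v = ∫ x, h x ∂Q} (deriv ψ β) :=
  stmt6_general P h r hr hint hnd ψ hψ
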